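/- arXiv:2307.01967 — 4 statements merged into one kernel-verified Lean document; each statement's English description precedes it below -/
import Mathlib

section
/- The set of minimal absent words of a string S of length n over an alphabet of size σ ≥ 2 has cardinality at most σ·n + σ (in particular it is finite, of size O(σn)). -/
/-!
Write a minimal absent word as `w = a :: u`. Its tail `u` is a proper factor, hence occurs in `S`
at some position `p ≤ n`. The pair `(a, p)` determines `w`: two minimal absent words with the same
pair have comparable tails (both are prefixes of `S.drop p`), so one is a factor of the other, and
minimal absent words form an antichain for the factor order. Hence there are at most `σ (n + 1)`.
-/

def IsMAW {α : Type*} (w S : List α) : Prop :=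
  ¬ w <:+: S ∧ ∀ v : List α, v <:+: w → v ≠ w → v <:+: S

theorem List.IsInfix.exists_prefix_drop {α : Type*} {u S : List α} (h : u <:+: S) :
    ∃ p : Fin (S.length + 1), u <+: S.drop p := by
  obtain ⟨s, t, rfl⟩ := h
  exact ⟨⟨s.length, by simp⟩, by simp⟩

namespace IsMAW

variable {α : Type*} {w w' S : List α}

theorem ne_nil (h : IsMAW w S) : w ≠ [] := by
  rintro rfl
  exact h.1 List.nil_infix

theorem tail_infix (h : IsMAW w S) : w.tail <:+: S := by
  obtain ⟨a, u, rfl⟩ := List.exists_cons_of_ne_nil h.ne_nil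
  exact h.2 u (List.suffix_cons a u).isInfix List.ne_cons_self

theorem eq_of_infix (h : IsMAW w S) (h' : IsMAW w' S) (hww' : w <:+: w') : w = w' := by
  by_contra hne
  exact h.1 (h'.2 w hww' hne)

theorem eq_of_head_eq_of_tail_prefix_drop (h : IsMAW w S) (h' : IsMAW w' S)
    (hhead : w.head h.ne_nil = w'.head h'.ne_nil) {p : ℕ}
    (ht : w.tail <+: S.drop p) (ht' : w'.tail <+: S.drop p) : w = w' := by
  obtain ⟨a, u, rfl⟩ := List.exists_cons_of_ne_nil h.ne_nil
  obtain ⟨a', u', rfl⟩ := List.exists_cons_of_ne_nil h'.ne_nil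
  obtain rfl : a = a' := hhead
  rcases List.prefix_or_prefix_of_prefix ht ht' with huu' | hu'u
  · exact h.eq_of_infix h' (List.prefix_cons_inj a |>.2 huu').isInfix
  · exact (h'.eq_of_infix h (List.prefix_cons_inj a |>.2 hu'u).isInfix).symm

noncomputable def code (w : {w : List α // IsMAW w S}) : α × Fin (S.length + 1) :=
  (w.1.head w.2.ne_nil, w.2.tail_infix.exists_prefix_drop.choose)

theorem code_injective : Function.Injective (code (S := S)) := fun w w' hcode =>
  Subtype.ext <| w.2.eq_of_head_eq_of_tail_prefix_drop w'.2 (congrArg Prod.fst hcode)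
    w.2.tail_infix.exists_prefix_drop.choose_spec
    (congrArg (fun c => (c.2 : ℕ)) hcode ▸ w'.2.tail_infix.exists_prefix_drop.choose_spec)

end IsMAW

theorem maw_card_le_general {α : Type*} [Fintype α] (S : List α) :
    {w : List α | IsMAW w S}.Finite ∧
      {w : List α | IsMAW w S}.ncard ≤ Fintype.card α * S.length + Fintype.card α := by
  have : Finite {w : List α | IsMAW w S} := Finite.of_injective _ IsMAW.code_injective
  refine ⟨Set.toFinite _, ?_⟩
  calc {w : List α | IsMAW w S}.ncard
      = Nat.card {w : List α | IsMAW w S} := (Nat.card_coe_set_eq _).symm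
    _ ≤ Nat.card (α × Fin (S.length + 1)) := Nat.card_le_card_of_injective _ IsMAW.code_injective
    _ = Fintype.card α * S.length + Fintype.card α := by
      rw [Nat.card_eq_fintype_card, Fintype.card_prod, Fintype.card_fin, Nat.mul_succ]

/-- over an alphabet of size `σ ≥ 2`, the set of MAWs of a string `S`
of length `n` is finite, of cardinality at most `σ·n + σ`. -/
theorem maw_card_le {α : Type*} [Fintype α] (hσ : 2 ≤ Fintype.card α) (S : List α) :
    {w : List α | IsMAW w S}.Finite ∧
      {w : List α | IsMAW w S}.ncard ≤ Fintype.card α * S.length + Fintype.card α :=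
  maw_card_le_general S
end

section
/- For a set 𝒮 of strings, the relation ≡_𝒮 defined by w ≡_𝒮 u iff EndPos_𝒮(w) = EndPos_𝒮(u) is an equivalence relation on Σ*, and any two substrings of 𝒮 in the same non-degenerate equivalence class are such that one is a suffix of the other. -/
/-- The set of ending positions of occurrences of `w` in the strings of the
family `S`: `(i, j) ∈ EndPos S w` iff `1 ≤ j ≤ |Sᵢ|` and `Sᵢ[j-|w|+1..j] = w`. -/
def EndPos {α : Type*} {k : ℕ} (S : Fin k → List α) (w : List α) :
    Set (Fin k × ℕ) :=
  {p | 1 ≤ p.2 ∧ w.length ≤ p.2 ∧ p.2 ≤ (S p.1).length ∧ w <:+ (S p.1).take p.2}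

/-- `≡_𝒮` (equality of `EndPos` sets) is an equivalence relation, and
any two nonempty substrings of `𝒮` in the same non-degenerate class are such that
one is a suffix of the other. -/
theorem endPos_equivalence_and_suffix {α : Type*} {k : ℕ} (S : Fin k → List α) :
    Equivalence (fun w u : List α => EndPos S w = EndPos S u) ∧
    (∀ w u : List α, w ≠ [] → u ≠ [] →
      (∃ i, w <:+: S i) → (∃ i, u <:+: S i) →
      (EndPos S w).Nonempty → EndPos S w = EndPos S u →
      (w <:+ u ∨ u <:+ w)) := by
  constructor
  · exact ⟨fun _ => rfl, fun h => h.symm, fun h₁ h₂ => h₁.trans h₂⟩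
  · intro w u _ _ _ _ ⟨p, hp⟩ heq
    have hp' : p ∈ EndPos S u := heq ▸ hp
    exact List.suffix_or_suffix_of_suffix hp.2.2.2 hp'.2.2.2
end

section
/- If T = S₁⋯S_k with unique separators #ᵢ (each occurring exactly once in T, as the last character of Sᵢ), then any substring of T containing some #ᵢ in a non-final position occurs exactly once in T. -/
/-!
An occurrence of `w` ending at `p` puts `w[j]` at position `p - |w| + j` of `T`. If `w[j]` is a
character occurring only once in `T`, two occurrences ending at `p` and `q` give
`p - |w| + j = q - |w| + j`, hence `p = q`; and a substring occurs at least once.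
-/

def EndPos1 {α : Type*} (S w : List α) : Set ℕ :=
  {j | 1 ≤ j ∧ w.length ≤ j ∧ j ≤ S.length ∧ w <:+ S.take j}

theorem List.eq_of_getElem?_eq_some_of_count_eq_one {α : Type*} [DecidableEq α] {l : List α}
    {c : α} (h : l.count c = 1) {a b : ℕ} (ha : l[a]? = some c) (hb : l[b]? = some c) :
    a = b := by
  suffices ∀ {a b}, a < b → l[a]? = some c → l[b]? = some c → False by
    by_contra hne
    rcases Nat.lt_or_gt_of_ne hne with hab | hab
    exacts [this hab ha hb, this hab hb ha]
  intro a b hab ha hb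
  have h_take : c ∈ l.take b := List.mem_of_getElem? (by rwa [List.getElem?_take_of_lt hab])
  have h_drop : c ∈ l.drop b := List.mem_of_getElem? (i := 0) (by rwa [List.getElem?_drop])
  have h_split := List.count_append (a := c) (l₁ := l.take b) (l₂ := l.drop b)
  rw [List.take_append_drop] at h_split
  have := List.count_pos_iff.mpr h_take
  have := List.count_pos_iff.mpr h_drop
  omega

section EndPos1

variable {α : Type*} {T w : List α}

theorem getElem?_of_mem_endPos1 {p : ℕ} (hp : p ∈ EndPos1 T w) {j : ℕ} (hj : j < w.length) :
    T[p - w.length + j]? = w[j]? := by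
  obtain ⟨-, hwp, hpT, u, hu⟩ := hp
  have hu_len : u.length = p - w.length := by
    have := congrArg List.length hu
    simp only [List.length_append, List.length_take] at this
    omega
  rw [← List.getElem?_take_of_lt (j := p) (by omega), ← hu, ← hu_len,
    List.getElem?_append_right (by omega), Nat.add_sub_cancel_left]

theorem endPos1_nonempty_of_infix (hw : w ≠ []) (hsub : w <:+: T) :
    (EndPos1 T w).Nonempty := by
  obtain ⟨s, t, rfl⟩ := hsub
  have := List.length_pos_of_ne_nil hw
  refine ⟨s.length + w.length, by omega, by omega, by simp, s, ?_⟩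
  rw [List.take_left' (by simp)]

theorem endPos1_subsingleton_of_count_eq_one [DecidableEq α] {c : α} (hc : T.count c = 1)
    {j : ℕ} (hj : w[j]? = some c) : (EndPos1 T w).Subsingleton := by
  intro p hp q hq
  have hj_lt : j < w.length := (List.getElem?_eq_some_iff.mp hj).1
  have := List.eq_of_getElem?_eq_some_of_count_eq_one hc
    ((getElem?_of_mem_endPos1 hp hj_lt).trans hj) ((getElem?_of_mem_endPos1 hq hj_lt).trans hj)
  have := hp.2.1
  have := hq.2.1
  omega

end EndPos1

/-- if each separator `marks i` occurs exactly once in `T`, then any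
substring `w` of `T` containing some `marks i` in a non-final position occurs
exactly once in `T`: `|EndPos_T(w)| = 1`. -/
theorem substring_with_inner_separator_occurs_once {α : Type*} [DecidableEq α]
    {k : ℕ} (T : List α) (marks : Fin k → α)
    (honce : ∀ i, T.count (marks i) = 1)
    (w : List α) (hsub : w <:+: T)
    (hin : ∃ (j : ℕ) (i : Fin k), j + 1 < w.length ∧ w[j]? = some (marks i)) :
    (EndPos1 T w).ncard = 1 := by
  obtain ⟨j, i, -, hj⟩ := hin
  have hw : w ≠ [] := by
    rintro rfl
    simp at hj
  obtain ⟨p, hp⟩ := endPos1_nonempty_of_infix hw hsub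
  exact Set.ncard_eq_one.mpr
    ⟨p, (endPos1_subsingleton_of_count_eq_one (honce i) hj).eq_singleton_of_mem hp⟩
end

section
/- For strings S₁, S₂: a string w = aub (a,b ∈ Σ, u ∈ Σ*) belongs to MAW(𝒮_{10}) = MAW(S₁) \ MAW(S₂) if and only if one of the following holds: (1) au, ub ∈ Substr(S₁) ∩ Substr(S₂), aub ∈ Substr(S₂) \ Substr(S₁); (2) au ∈ Substr(S₁) ∩ Substr(S₂), ub ∈ Substr(S₁) \ Substr(S₂), aub ∉ Substr(S₁) ∪ Substr(S₂); (3) au ∈ Substr(S₁) \ Substr(S₂), ub ∈ Substr(S₁) \ Substr(S₂), aub ∉ Substr(S₁) ∪ Substr(S₂); (4) au ∈ Substr(S₁) \ Substr(S₂), ub ∈ Substr(S₁) ∩ Substr(S₂), aub ∉ Substr(S₁) ∪ Substr(S₂). -/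
lemma proper_infix_cases {α : Type*} (a b : α) (u v : List α)
    (h : v <:+: (a :: u ++ [b])) (hne : v ≠ a :: u ++ [b]) :
    v <:+: (a :: u) ∨ v <:+: (u ++ [b]) := by
  obtain ⟨s, t, hst⟩ := h
  rcases t.eq_nil_or_concat with rfl | ⟨t', c, rfl⟩
  · -- s ++ v = a :: u ++ [b]; s ≠ []
    rcases s with _ | ⟨x, s'⟩
    · simp at hst; exact absurd hst hne
    · right
      refine ⟨s', [], ?_⟩
      have : x :: (s' ++ v) = a :: (u ++ [b]) := by simpa using hst
      simp only [List.cons.injEq] at this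
      simp [this.2]
  · left
    have : (s ++ v ++ t') ++ [c] = (a :: u) ++ [b] := by
      simpa [List.append_assoc] using hst
    have h2 := List.append_inj' this (by simp)
    exact ⟨s, t', h2.1⟩

lemma isMAW_iff {α : Type*} (a b : α) (u S : List α) :
    IsMAW (a :: u ++ [b]) S ↔
      ¬ (a :: u ++ [b]) <:+: S ∧ (a :: u) <:+: S ∧ (u ++ [b]) <:+: S := by
  constructor
  · rintro ⟨h1, h2⟩
    refine ⟨h1, h2 _ ⟨[], [b], by simp⟩ ?_, h2 _ ⟨[a], [], by simp⟩ ?_⟩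
    · intro h; have := congrArg List.length h; simp at this
    · intro h; have := congrArg List.length h; simp at this
  · rintro ⟨h1, h2, h3⟩
    refine ⟨h1, fun v hv hne => ?_⟩
    rcases proper_infix_cases a b u v hv hne with h | h
    · exact h.trans h2
    · exact h.trans h3

/-- the case analysis for `w = aub ∈ MAW(𝒮_{10}) = MAW(S₁) \ MAW(S₂)`. -/
theorem maw10_iff_cases {α : Type*} (S₁ S₂ : List α) (a b : α) (u : List α) :
    (IsMAW (a :: u ++ [b]) S₁ ∧ ¬ IsMAW (a :: u ++ [b]) S₂) ↔
      -- (1) au, ub ∈ Substr(S₁) ∩ Substr(S₂), aub ∈ Substr(S₂) \ Substr(S₁)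
      (((a :: u) <:+: S₁ ∧ (a :: u) <:+: S₂) ∧
       ((u ++ [b]) <:+: S₁ ∧ (u ++ [b]) <:+: S₂) ∧
       ((a :: u ++ [b]) <:+: S₂ ∧ ¬ (a :: u ++ [b]) <:+: S₁)) ∨
      -- (2) au ∈ Substr(S₁) ∩ Substr(S₂), ub ∈ Substr(S₁) \ Substr(S₂), aub absent
      (((a :: u) <:+: S₁ ∧ (a :: u) <:+: S₂) ∧
       ((u ++ [b]) <:+: S₁ ∧ ¬ (u ++ [b]) <:+: S₂) ∧
       (¬ (a :: u ++ [b]) <:+: S₁ ∧ ¬ (a :: u ++ [b]) <:+: S₂)) ∨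
      -- (3) au ∈ Substr(S₁) \ Substr(S₂), ub ∈ Substr(S₁) \ Substr(S₂), aub absent
      (((a :: u) <:+: S₁ ∧ ¬ (a :: u) <:+: S₂) ∧
       ((u ++ [b]) <:+: S₁ ∧ ¬ (u ++ [b]) <:+: S₂) ∧
       (¬ (a :: u ++ [b]) <:+: S₁ ∧ ¬ (a :: u ++ [b]) <:+: S₂)) ∨
      -- (4) au ∈ Substr(S₁) \ Substr(S₂), ub ∈ Substr(S₁) ∩ Substr(S₂), aub absent
      (((a :: u) <:+: S₁ ∧ ¬ (a :: u) <:+: S₂) ∧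
       ((u ++ [b]) <:+: S₁ ∧ (u ++ [b]) <:+: S₂) ∧
       (¬ (a :: u ++ [b]) <:+: S₁ ∧ ¬ (a :: u ++ [b]) <:+: S₂)) := by
  rw [isMAW_iff, isMAW_iff]
  set P1 := (a :: u ++ [b]) <:+: S₁
  set P2 := (a :: u ++ [b]) <:+: S₂
  set Q1 := (a :: u) <:+: S₁
  set Q2 := (a :: u) <:+: S₂
  set R1 := (u ++ [b]) <:+: S₁
  set R2 := (u ++ [b]) <:+: S₂
  have hq2 : P2 → Q2 := fun h => List.IsInfix.trans ⟨[], [b], by simp⟩ h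
  have hr2 : P2 → R2 := fun h => List.IsInfix.trans ⟨[a], [], by simp⟩ h
  by_cases P1 <;> by_cases P2 <;> by_cases Q1 <;> by_cases Q2 <;>
    by_cases R1 <;> by_cases R2 <;> simp_all
end
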